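/- Branch contraction preserves global traces: if g is a prefix with pid(g) ∩ pid(g_i) = ∅ for all i ∈ I (where g_i = p→q:l_i are the branch guards), then Tr(p→q:{l_i : g;G_i}_{i∈I}) = Tr(g;(p→q:{l_i:G_i}_{i∈I})). -/

import Mathlib

abbrev Label := ℕ

inductive VTy
  | bool | nat
deriving DecidableEq

inductive Msg
  | val (U : VTy)
  | lab (l : Label)
deriving DecidableEq

structure Pref where
  sender : ℕ
  receiver : ℕ
  msg : Msg
deriving DecidableEq

def Pref.pid (g : Pref) : Set ℕ := {g.sender, g.receiver}

inductive Global
  | comm (g : Pref) (G : Global)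
  | branch (p q : ℕ) (bs : List (Label × Global))
  | var (t : ℕ)
  | mu (t : ℕ) (G : Global)
  | gend

namespace Global

def subst (t : ℕ) (H : Global) : Global → Global
  | comm g G => comm g (subst t H G)
  | branch p q bs => branch p q (bs.attach.map fun ⟨⟨l, G⟩, h⟩ => (l, subst t H G))
  | var s => if s = t then H else var s
  | mu s G => if s = t then mu s G else mu s (subst t H G)
  | gend => gend
decreasing_by
  all_goals simp_wf
  all_goals try (have := List.sizeOf_lt_of_mem h; simp only [Prod.mk.sizeOf_spec] at this)
  all_goals try simp only [Global.branch.sizeOf_spec, Global.mu.sizeOf_spec, Global.comm.sizeOf_spec] at *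
  all_goals omega

end Global

inductive GStep : Global → Pref → Global → Prop
  | inter (g : Pref) (G : Global) :
      GStep (.comm g G) g G
  | selbra {p q : ℕ} {bs : List (Label × Global)} {l : Label} {Gk : Global} :
      (l, Gk) ∈ bs →
      GStep (.branch p q bs) ⟨p, q, .lab l⟩ Gk
  | iperm {G G' : Global} {g g' : Pref} :
      GStep G g' G' → g.pid ∩ g'.pid = ∅ →
      GStep (.comm g G) g' (.comm g G')
  | sbperm {p q : ℕ} {bs bs' : List (Label × Global)} {g' : Pref} :
      bs.length = bs'.length →
      (∀ bb ∈ bs.zip bs', bb.1.1 = bb.2.1) →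
      (∀ bb ∈ bs.zip bs', GStep bb.1.2 g' bb.2.2) →
      g'.pid ∩ ({p, q} : Set ℕ) = ∅ →
      GStep (.branch p q bs) g' (.branch p q bs')
  | recur {t : ℕ} {G G' : Global} {g : Pref} :
      GStep (Global.subst t (.mu t G) G) g G' →
      GStep (.mu t G) g G'

inductive GSteps : Global → List Pref → Global → Prop
  | refl (G : Global) : GSteps G [] G
  | cons {G G₁ G₂ : Global} {g : Pref} {tr : List Pref} :
      GStep G g G₁ → GSteps G₁ tr G₂ → GSteps G (g :: tr) G₂

def GTraces (G : Global) : Set (List Pref) := {tr | ∃ G', GSteps G tr G'}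

/-! ### Local types -/

inductive Local
  | send (q : ℕ) (m : Msg) (T : Local)
  | recv (p : ℕ) (m : Msg) (T : Local)
  | sel (q : ℕ) (bs : List (Label × Local))
  | bra (p : ℕ) (bs : List (Label × Local))
  | var (t : ℕ)
  | mu (t : ℕ) (T : Local)
  | lend

namespace Local

def subst (t : ℕ) (H : Local) : Local → Local
  | send q m T => send q m (subst t H T)
  | recv p m T => recv p m (subst t H T)
  | sel q bs => sel q (bs.attach.map fun ⟨⟨l, T⟩, h⟩ => (l, subst t H T))
  | bra p bs => bra p (bs.attach.map fun ⟨⟨l, T⟩, h⟩ => (l, subst t H T))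
  | var s => if s = t then H else var s
  | mu s T => if s = t then mu s T else mu s (subst t H T)
  | lend => lend
decreasing_by
  all_goals simp_wf
  all_goals try (have := List.sizeOf_lt_of_mem h; simp only [Prod.mk.sizeOf_spec] at this)
  all_goals try simp only [Local.sel.sizeOf_spec, Local.bra.sizeOf_spec, Local.mu.sizeOf_spec] at *
  all_goals omega

end Local

/-- Local labels `ℓ ::= q!m | p?m`. -/
inductive LLabel
  | send (q : ℕ) (m : Msg)
  | recv (p : ℕ) (m : Msg)
deriving DecidableEq

/-- The labelled transition system over local types. -/
inductive LStep : Local → LLabel → Local → Prop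
  | send {q : ℕ} {m : Msg} {T : Local} : LStep (.send q m T) (.send q m) T
  | recv {p : ℕ} {m : Msg} {T : Local} : LStep (.recv p m T) (.recv p m) T
  | sel {q : ℕ} {bs : List (Label × Local)} {l : Label} {T : Local} :
      (l, T) ∈ bs → LStep (.sel q bs) (.send q (.lab l)) T
  | bra {p : ℕ} {bs : List (Label × Local)} {l : Label} {T : Local} :
      (l, T) ∈ bs → LStep (.bra p bs) (.recv p (.lab l)) T
  | recur {t : ℕ} {T T' : Local} {ℓ : LLabel} :
      LStep (Local.subst t (.mu t T) T) ℓ T' → LStep (.mu t T) ℓ T'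

/-- The set of labels occurring in a list of local branches. -/
def labelsOf (bs : List (Label × Local)) : Set Label := {l | ∃ T, (l, T) ∈ bs}

/-! ### Merging of local types -/

mutual
  /-- The (partial, relationally presented) merge operator `T₁ ⊔ T₂ = T₃` on local types:
  homomorphic everywhere except at branchings, which are merged by taking the union
  of branches, merging continuations of common labels. -/
  inductive Merge : Local → Local → Local → Prop
    | send {q m T₁ T₂ T₃} : Merge T₁ T₂ T₃ → Merge (.send q m T₁) (.send q m T₂) (.send q m T₃)
    | recv {p m T₁ T₂ T₃} : Merge T₁ T₂ T₃ → Merge (.recv p m T₁) (.recv p m T₂) (.recv p m T₃)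
    | sel {q bs₁ bs₂ bs₃} : MergeBs bs₁ bs₂ bs₃ → Merge (.sel q bs₁) (.sel q bs₂) (.sel q bs₃)
    | bra {p : ℕ} {bs₁ bs₂ bs₃ : List (Label × Local)} :
        labelsOf bs₃ = labelsOf bs₁ ∪ labelsOf bs₂ →
        (∀ l T₃, (l, T₃) ∈ bs₃ → MergeBranch bs₁ bs₂ l T₃) →
        Merge (.bra p bs₁) (.bra p bs₂) (.bra p bs₃)
    | var {t} : Merge (.var t) (.var t) (.var t)
    | mu {t T₁ T₂ T₃} : Merge T₁ T₂ T₃ → Merge (.mu t T₁) (.mu t T₂) (.mu t T₃)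
    | lend : Merge .lend .lend .lend

  /-- Pointwise merging of selection branches (same labels in the same order). -/
  inductive MergeBs : List (Label × Local) → List (Label × Local) → List (Label × Local) → Prop
    | nil : MergeBs [] [] []
    | cons {l T₁ T₂ T₃ bs₁ bs₂ bs₃} :
        Merge T₁ T₂ T₃ → MergeBs bs₁ bs₂ bs₃ →
        MergeBs ((l, T₁) :: bs₁) ((l, T₂) :: bs₂) ((l, T₃) :: bs₃)

  /-- How a branch `(l, T₃)` of a merged branching arises from the two merged lists. -/
  inductive MergeBranch : List (Label × Local) → List (Label × Local) → Label → Local → Prop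
    | both {bs₁ bs₂ l T₁ T₂ T₃} :
        (l, T₁) ∈ bs₁ → (l, T₂) ∈ bs₂ → Merge T₁ T₂ T₃ → MergeBranch bs₁ bs₂ l T₃
    | left {bs₁ bs₂ l T₃} :
        (l, T₃) ∈ bs₁ → l ∉ labelsOf bs₂ → MergeBranch bs₁ bs₂ l T₃
    | right {bs₁ bs₂ l T₃} :
        (l, T₃) ∈ bs₂ → l ∉ labelsOf bs₁ → MergeBranch bs₁ bs₂ l T₃
end

/-- Iterated merge `⊔ᵢ Tᵢ` of a (nonempty) family of local types. -/
inductive MergeList : List Local → Local → Prop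
  | single {T} : MergeList [T] T
  | cons {T T' T'' : Local} {Ts : List Local} :
      MergeList Ts T' → Merge T T' T'' → MergeList (T :: Ts) T''

/-! ### Projection of global types onto participants -/

/-- `Proj G r T` is the graph of the (partial) projection function `⌊G⌋r = T`. -/
inductive Proj : Global → ℕ → Local → Prop
  | comm_send {g : Pref} {G : Global} {r : ℕ} {T : Local} :
      r = g.sender → r ≠ g.receiver → Proj G r T →
      Proj (.comm g G) r (.send g.receiver g.msg T)
  | comm_recv {g : Pref} {G : Global} {r : ℕ} {T : Local} :
      r = g.receiver → r ≠ g.sender → Proj G r T →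
      Proj (.comm g G) r (.recv g.sender g.msg T)
  | comm_skip {g : Pref} {G : Global} {r : ℕ} {T : Local} :
      r ≠ g.sender → r ≠ g.receiver → Proj G r T →
      Proj (.comm g G) r T
  | branch_sel {p q : ℕ} {bs : List (Label × Global)} {bs' : List (Label × Local)} :
      p ≠ q →
      bs.length = bs'.length →
      (∀ bb ∈ bs.zip bs', bb.1.1 = bb.2.1) →
      (∀ bb ∈ bs.zip bs', Proj bb.1.2 p bb.2.2) →
      Proj (.branch p q bs) p (.sel q bs')
  | branch_bra {p q : ℕ} {bs : List (Label × Global)} {bs' : List (Label × Local)} :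
      p ≠ q →
      bs.length = bs'.length →
      (∀ bb ∈ bs.zip bs', bb.1.1 = bb.2.1) →
      (∀ bb ∈ bs.zip bs', Proj bb.1.2 q bb.2.2) →
      Proj (.branch p q bs) q (.bra p bs')
  | branch_merge {p q r : ℕ} {bs : List (Label × Global)} {Ts : List Local} {T : Local} :
      r ≠ p → r ≠ q →
      bs.length = Ts.length →
      (∀ bb ∈ bs.zip Ts, Proj bb.1.2 r bb.2) →
      MergeList Ts T →
      Proj (.branch p q bs) r T
  | mu_proj {t : ℕ} {G : Global} {r : ℕ} {T : Local} :
      Proj G r T → T ≠ .var t → Proj (.mu t G) r (.mu t T)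
  | mu_end {t : ℕ} {G : Global} {r : ℕ} :
      Proj G r (.var t) → Proj (.mu t G) r .lend
  | var {t r} : Proj (.var t) r (.var t)
  | gend {r} : Proj .gend r .lend

/-! ### Isomorphism of global types -/

/-- `Iso G₁ G₂` (`G₁ ≅ G₂`): the smallest congruence on global types containing
prefix commutativity, branching, and branching distributivity (branch index
sets are nonempty, as usual for multiparty session types). -/
inductive Iso : Global → Global → Prop
  | refl (G : Global) : Iso G G
  | symm {G G'} : Iso G G' → Iso G' G
  | trans {G G' G''} : Iso G G' → Iso G' G'' → Iso G G''
  | comm_cong {g : Pref} {G G'} : Iso G G' → Iso (.comm g G) (.comm g G')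
  | branch_cong {p q : ℕ} {bs bs' : List (Label × Global)} :
      bs.length = bs'.length →
      (∀ bb ∈ bs.zip bs', bb.1.1 = bb.2.1) →
      (∀ bb ∈ bs.zip bs', Iso bb.1.2 bb.2.2) →
      Iso (.branch p q bs) (.branch p q bs')
  | mu_cong {t : ℕ} {G G'} : Iso G G' → Iso (.mu t G) (.mu t G')
  | swap {g₁ g₂ : Pref} {G : Global} :
      g₁.pid ∩ g₂.pid = ∅ →
      Iso (.comm g₁ (.comm g₂ G)) (.comm g₂ (.comm g₁ G))
  | branching {p q : ℕ} {g : Pref} {bs : List (Label × Global)} :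
      bs ≠ [] →
      g.pid ∩ ({p, q} : Set ℕ) = ∅ →
      Iso (.branch p q (bs.map fun b => (b.1, .comm g b.2))) (.comm g (.branch p q bs))
  | distrib {p q r s : ℕ} {lsI : List Label} {bsJ : List (Label × Global)} :
      lsI ≠ [] → bsJ ≠ [] →
      ({p, q} : Set ℕ) ∩ ({r, s} : Set ℕ) = ∅ →
      Iso (.branch p q (lsI.map fun l => (l, .branch r s bsJ)))
          (.branch r s (bsJ.map fun bj => (bj.1, .branch p q (lsI.map fun l => (l, bj.2)))))

/-! ### Configurations and their synchronous semantics -/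

/-- A configuration: a family of local types, one per participant. -/
abbrev Config := ℕ → Local

/-- The synchronous transition `[Synch]` between configurations, labelled by
the communication `p → q : m` (the pair of dual local labels `q!m · p?m`). -/
inductive CStep : Config → Pref → Config → Prop
  | synch {Δ Δ' : Config} {p q : ℕ} {m : Msg} :
      p ≠ q →
      LStep (Δ p) (.send q m) (Δ' p) →
      LStep (Δ q) (.recv p m) (Δ' q) →
      (∀ r, r ≠ p → r ≠ q → Δ' r = Δ r) →
      CStep Δ ⟨p, q, m⟩ Δ'

/-- Multi-step synchronous execution of a configuration. -/
inductive CSteps : Config → List Pref → Config → Prop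
  | refl (Δ : Config) : CSteps Δ [] Δ
  | cons {Δ Δ₁ Δ₂ : Config} {g : Pref} {tr : List Pref} :
      CStep Δ g Δ₁ → CSteps Δ₁ tr Δ₂ → CSteps Δ (g :: tr) Δ₂

/-- The configuration trace set `T_S(Δ)`, identifying the synchronisation label
`q!m · p?m` with the global label `p → q : m`. -/
def CTraces (Δ : Config) : Set (List Pref) := {tr | ∃ Δ', CSteps Δ tr Δ'}

/-- Configuration traces `σ`: per-participant sequences of local labels. -/
abbrev CTrace := ℕ → List LLabel

/-- The execution relation `Δ ↝^σ_synch Δ'`, accumulating per participant the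
local labels of a sequence of `[Synch]` steps. -/
inductive Exec : Config → CTrace → Config → Prop
  | refl (Δ : Config) : Exec Δ (fun _ => []) Δ
  | step {Δ Δ₁ Δ₂ : Config} {σ : CTrace} {g : Pref} :
      Exec Δ σ Δ₁ → CStep Δ₁ g Δ₂ →
      Exec Δ
        (fun r =>
          if r = g.sender then σ r ++ [.send g.receiver g.msg]
          else if r = g.receiver then σ r ++ [.recv g.sender g.msg]
          else σ r)
        Δ₂

/-- Terminated configurations: no `[Synch]` transition is available. -/
def Terminated (Δ : Config) : Prop := ∀ g Δ', ¬ CStep Δ g Δ'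

/-- The denotation of a configuration: its set of terminated traces. -/
def Denot (Δ : Config) : Set CTrace := {σ | ∃ Δ', Exec Δ σ Δ' ∧ Terminated Δ'}

/-!
Together with equality, the relation pairing `p→q:{lᵢ : g;Gᵢ}` with `g;(p→q:{lᵢ : Gᵢ})` is a
simulation in both directions. A `[SelBra]` step of the left side is matched by `[IPerm]` over
`[SelBra]`. An `[SBPerm]` step with a label independent of `g` moves every branch by `[IPerm]`,
which the right side matches by `[IPerm]` over `[SBPerm]`, and the results are again related.
An `[SBPerm]` step whose label meets `pid g` must move every branch by `[Inter]`; since `I ≠ ∅`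
its label is `g`, and the right side matches it by `[Inter]`.
-/

open Relation

theorem Pref.pid_inter_self_ne_empty (g : Pref) : g.pid ∩ g.pid ≠ ∅ :=
  Set.nonempty_iff_ne_empty.1 ⟨g.sender, by simp [Pref.pid]⟩

theorem List.Forall₂.exists_eq_map_right {α β γ : Type*} {f : γ → β} {S : α → γ → Prop}
    {l₁ : List α} {l₂ : List β} (h : Forall₂ (fun a b => ∃ c, b = f c ∧ S a c) l₁ l₂) :
    ∃ l₃, l₂ = l₃.map f ∧ Forall₂ S l₁ l₃ := by
  induction h with
  | nil => exact ⟨[], rfl, .nil⟩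
  | cons hab _ ih =>
    obtain ⟨c, rfl, hc⟩ := hab
    obtain ⟨l₃, rfl, h₃⟩ := ih
    exact ⟨c :: l₃, rfl, .cons hc h₃⟩

/-- The premise of `[SBPerm]` for a single branch. -/
def BranchStep (g' : Pref) (b c : Label × Global) : Prop := b.1 = c.1 ∧ GStep b.2 g' c.2

namespace GStep

theorem comm_iff {g g' : Pref} {G G' : Global} :
    GStep (.comm g G) g' G' ↔
      (g' = g ∧ G' = G) ∨ (g.pid ∩ g'.pid = ∅ ∧ ∃ G'', GStep G g' G'' ∧ G' = .comm g G'') := by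
  constructor
  · intro h
    cases h with
    | inter => exact .inl ⟨rfl, rfl⟩
    | iperm h hd => exact .inr ⟨hd, _, h, rfl⟩
  · rintro (⟨rfl, rfl⟩ | ⟨hd, G'', h, rfl⟩)
    · exact .inter _ _
    · exact .iperm h hd

theorem branch_iff {p q : ℕ} {bs : List (Label × Global)} {g' : Pref} {G' : Global} :
    GStep (.branch p q bs) g' G' ↔
      (∃ l, g' = ⟨p, q, .lab l⟩ ∧ (l, G') ∈ bs) ∨
      (∃ bs', List.Forall₂ (BranchStep g') bs bs' ∧ g'.pid ∩ ({p, q} : Set ℕ) = ∅ ∧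
        G' = .branch p q bs') := by
  constructor
  · intro h
    cases h with
    | selbra hmem => exact .inl ⟨_, rfl, hmem⟩
    | sbperm hlen hlab hstep hd =>
      exact .inr ⟨_, List.forall₂_iff_zip.2 ⟨hlen, fun hb => ⟨hlab _ hb, hstep _ hb⟩⟩, hd, rfl⟩
  · rintro (⟨l, rfl, hmem⟩ | ⟨bs', hbs', hd, rfl⟩)
    · exact .selbra hmem
    · obtain ⟨hlen, hzip⟩ := List.forall₂_iff_zip.1 hbs'
      exact .sbperm hlen (fun _ hb => (hzip hb).1) (fun _ hb => (hzip hb).2) hd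

end GStep

def IsGSimulation (R : Global → Global → Prop) : Prop :=
  ∀ ⦃A B A' : Global⦄ ⦃g : Pref⦄, R A B → GStep A g A' → ∃ B', GStep B g B' ∧ R A' B'

namespace IsGSimulation

variable {R : Global → Global → Prop}

theorem of_reflGen {r : Global → Global → Prop}
    (h : ∀ ⦃A B A' : Global⦄ ⦃g : Pref⦄, r A B → GStep A g A' →
      ∃ B', GStep B g B' ∧ ReflGen r A' B') :
    IsGSimulation (ReflGen r) := by
  rintro A B A' g (_ | hAB) hA
  · exact ⟨A', hA, .refl⟩
  · exact h hAB hA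

theorem gSteps (hR : IsGSimulation R) {A B A' : Global} {tr : List Pref} (hAB : R A B)
    (h : GSteps A tr A') : ∃ B', GSteps B tr B' ∧ R A' B' := by
  induction h generalizing B with
  | refl => exact ⟨B, .refl B, hAB⟩
  | cons hA _ ih =>
    obtain ⟨B₁, hB, hAB₁⟩ := hR hAB hA
    obtain ⟨B', hB', hAB'⟩ := ih hAB₁
    exact ⟨B', .cons hB hB', hAB'⟩

theorem gTraces_subset (hR : IsGSimulation R) {A B : Global} (hAB : R A B) :
    GTraces A ⊆ GTraces B := fun _ ⟨_, h⟩ =>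
  let ⟨B', hB', _⟩ := hR.gSteps hAB h
  ⟨B', hB'⟩

end IsGSimulation

inductive BranchContraction : Global → Global → Prop
  | intro {p q : ℕ} {g : Pref} {bs : List (Label × Global)} :
      bs ≠ [] → g.pid ∩ ({p, q} : Set ℕ) = ∅ →
      BranchContraction (.branch p q (bs.map fun b => (b.1, .comm g b.2)))
        (.comm g (.branch p q bs))

namespace BranchContraction

theorem isGSimulation : IsGSimulation (ReflGen BranchContraction) := by
  refine IsGSimulation.of_reflGen ?_
  intro _ _ A' g' hAB hA
  cases hAB with | @intro p q g bs hne hdisj => ?_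
  rcases GStep.branch_iff.1 hA with ⟨l, rfl, hmem⟩ | ⟨cs, hcs, hd, rfl⟩
  · obtain ⟨⟨l, G⟩, hb, heq⟩ := List.mem_map.1 hmem
    cases heq
    exact ⟨_, .iperm (.selbra hb) hdisj, .refl⟩
  rw [List.forall₂_map_left_iff] at hcs
  by_cases hgg' : g.pid ∩ g'.pid = ∅
  · -- every branch `g;Gᵢ` steps by `[IPerm]`, so the targets are again guarded by `g`
    have hcs' : List.Forall₂ (fun b c => ∃ b', c = (b'.1, .comm g b'.2) ∧ BranchStep g' b b')
        bs cs := hcs.imp fun b c ⟨hl, hs⟩ => by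
      rcases GStep.comm_iff.1 hs with ⟨rfl, _⟩ | ⟨_, G, hG, hc⟩
      · exact absurd hgg' (Pref.pid_inter_self_ne_empty _)
      · exact ⟨(c.1, G), Prod.ext rfl hc, hl, hG⟩
    obtain ⟨bs', rfl, hbs'⟩ := hcs'.exists_eq_map_right
    have hne' : bs' ≠ [] := by
      rintro rfl
      exact hne (List.forall₂_nil_right_iff.1 hbs')
    exact ⟨_, .iperm (GStep.branch_iff.2 (.inr ⟨bs', hbs', hd, rfl⟩)) hgg',
      .single (intro hne' hdisj)⟩
  · -- `pid g` meets `pid g'`, so every branch `g;Gᵢ` steps by `[Inter]` and `g' = g`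
    have hcs' : List.Forall₂ (fun b c => g' = g ∧ b = c) bs cs := hcs.imp fun b c ⟨hl, hs⟩ => by
      rcases GStep.comm_iff.1 hs with ⟨rfl, hc⟩ | ⟨hd', _⟩
      · exact ⟨rfl, Prod.ext hl hc.symm⟩
      · exact absurd hd' hgg'
    obtain rfl : g' = g := by
      cases hcs' with
      | nil => exact absurd rfl hne
      | cons h _ => exact h.1
    obtain rfl : bs = cs := List.forall₂_eq_eq_eq ▸ hcs'.imp fun _ _ h => h.2
    exact ⟨_, .inter _ _, .refl⟩

theorem isGSimulation_flip : IsGSimulation (ReflGen (flip BranchContraction)) := by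
  refine IsGSimulation.of_reflGen ?_
  intro _ _ B' g' hBA hB
  cases hBA with | @intro p q g bs hne hdisj => ?_
  rcases GStep.comm_iff.1 hB with ⟨rfl, rfl⟩ | ⟨hgg', B'', hB'', rfl⟩
  · refine ⟨_, GStep.branch_iff.2 (.inr ⟨bs, ?_, hdisj, rfl⟩), .refl⟩
    rw [List.forall₂_map_left_iff, List.forall₂_same]
    exact fun b _ => ⟨rfl, .inter _ b.2⟩
  rcases GStep.branch_iff.1 hB'' with ⟨l, rfl, hmem⟩ | ⟨bs', hbs', hd, rfl⟩
  · exact ⟨_, .selbra (List.mem_map_of_mem hmem), .refl⟩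
  · have hne' : bs' ≠ [] := by
      rintro rfl
      exact hne (List.forall₂_nil_right_iff.1 hbs')
    refine ⟨_, GStep.branch_iff.2 (.inr ⟨_, ?_, hd, rfl⟩), .single (intro hne' hdisj)⟩
    rw [List.forall₂_map_left_iff, List.forall₂_map_right_iff]
    exact hbs'.imp fun _ _ ⟨hl, hs⟩ => ⟨hl, .iperm hs hgg'⟩

end BranchContraction

/-- Branch contraction preserves global traces: if `g` is a prefix
with `pid(g) ∩ pid(g_i) = ∅` for all `i ∈ I` (where `pid(g_i) = {p, q}` and `I` is
nonempty), then `Tr(p→q:{l_i : g;G_i}_{i∈I}) = Tr(g;(p→q:{l_i:G_i}_{i∈I}))`. -/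
theorem branch_contraction_preserves_traces
    (p q : ℕ) (g : Pref) (bs : List (Label × Global))
    (hne : bs ≠ [])
    (hdisj : g.pid ∩ ({p, q} : Set ℕ) = ∅) :
    GTraces (.branch p q (bs.map fun b => (b.1, .comm g b.2)))
      = GTraces (.comm g (.branch p q bs)) :=
  have hBC := BranchContraction.intro hne hdisj
  (BranchContraction.isGSimulation.gTraces_subset (.single hBC)).antisymm
    (BranchContraction.isGSimulation_flip.gTraces_subset (.single hBC))
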